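/- Let A be a commutative ℚ-algebra with elements o₁, o₂, h₁, h₂, τ satisfying: oᵢ² = 0, hᵢ·oᵢ = 0, hᵢ^{n−2} = 6oᵢ (i = 1,2), τ·oᵢ = 0, τ·hᵢ = 0, and τ² = (b−1)·o₁·o₂. Then the subalgebra generated by o₁, o₂, h₁, h₂, τ is spanned as a ℚ-vector space by the monomials h₁^a · h₂^c (0 ≤ a, c ≤ n−2) together with τ. -/
import Mathlib


/-- Abstract tautological ring of `Y²`: if `o₁, o₂, h₁, h₂, τ` in a commutative
`ℚ`-algebra satisfy `oᵢ² = 0`, `hᵢ·oᵢ = 0`, `hᵢ^{n−2} = 6oᵢ`, `τ·oᵢ = 0`, `τ·hᵢ = 0`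
and `τ² = (b−1)·o₁·o₂`, then the subalgebra generated by these elements is spanned as
a `ℚ`-vector space by the monomials `h₁^a · h₂^c` (`0 ≤ a, c ≤ n−2`) together with `τ`. -/
theorem tautological_ring_of_Y2_spanned
    (A : Type*) [CommRing A] [Algebra ℚ A]
    (n b : ℕ) (hn : 3 ≤ n) (hb : 1 ≤ b)
    (o₁ o₂ h₁ h₂ τ : A)
    (ho₁ : o₁ * o₁ = 0) (ho₂ : o₂ * o₂ = 0)
    (hh₁ : h₁ * o₁ = 0) (hh₂ : h₂ * o₂ = 0)
    (hp₁ : h₁ ^ (n - 2) = (6 : ℚ) • o₁) (hp₂ : h₂ ^ (n - 2) = (6 : ℚ) • o₂)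
    (hτo₁ : τ * o₁ = 0) (hτo₂ : τ * o₂ = 0)
    (hτh₁ : τ * h₁ = 0) (hτh₂ : τ * h₂ = 0)
    (hτ2 : τ * τ = ((b : ℚ) - 1) • (o₁ * o₂)) :
    Subalgebra.toSubmodule (Algebra.adjoin ℚ ({o₁, o₂, h₁, h₂, τ} : Set A))
      = Submodule.span ℚ ({τ} ∪
          Set.range (fun p : Fin (n - 1) × Fin (n - 1) =>
            h₁ ^ (p.1 : ℕ) * h₂ ^ (p.2 : ℕ))) := by
  set S : Set A := {τ} ∪ Set.range (fun p : Fin (n - 1) × Fin (n - 1) =>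
            h₁ ^ (p.1 : ℕ) * h₂ ^ (p.2 : ℕ)) with hSdef
  have hmemS : ∀ a c : ℕ, a ≤ n - 2 → c ≤ n - 2 → h₁ ^ a * h₂ ^ c ∈ S := by
    intro a c ha hc
    exact Or.inr ⟨(⟨a, by omega⟩, ⟨c, by omega⟩), rfl⟩
  have hτS : τ ∈ S := Or.inl rfl
  have h₁zero : ∀ k, n - 1 ≤ k → h₁ ^ k = 0 := by
    intro k hk
    have h0 : h₁ ^ (n - 1) = 0 := by
      have e : h₁ ^ (n - 1) = h₁ ^ (n - 2) * h₁ := by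
        rw [← pow_succ]; congr 1; omega
      rw [e, hp₁, smul_mul_assoc, mul_comm, hh₁, smul_zero]
    calc h₁ ^ k = h₁ ^ (n - 1) * h₁ ^ (k - (n - 1)) := by
            rw [← pow_add]; congr 1; omega
      _ = 0 := by rw [h0, zero_mul]
  have h₂zero : ∀ k, n - 1 ≤ k → h₂ ^ k = 0 := by
    intro k hk
    have h0 : h₂ ^ (n - 1) = 0 := by
      have e : h₂ ^ (n - 1) = h₂ ^ (n - 2) * h₂ := by
        rw [← pow_succ]; congr 1; omega
      rw [e, hp₂, smul_mul_assoc, mul_comm, hh₂, smul_zero]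
    calc h₂ ^ k = h₂ ^ (n - 1) * h₂ ^ (k - (n - 1)) := by
            rw [← pow_add]; congr 1; omega
      _ = 0 := by rw [h0, zero_mul]
  have mono_mem : ∀ a c : ℕ, h₁ ^ a * h₂ ^ c ∈ Submodule.span ℚ S := by
    intro a c
    by_cases ha : a ≤ n - 2
    · by_cases hc : c ≤ n - 2
      · exact Submodule.subset_span (hmemS a c ha hc)
      · rw [h₂zero c (by omega), mul_zero]; exact zero_mem _
    · rw [h₁zero a (by omega), zero_mul]; exact zero_mem _
  have τmono : ∀ a c : ℕ, τ * (h₁ ^ a * h₂ ^ c) ∈ Submodule.span ℚ S := by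
    intro a c
    rcases Nat.eq_zero_or_pos a with rfl | ha
    · rcases Nat.eq_zero_or_pos c with rfl | hc
      · simpa using Submodule.subset_span hτS
      · have e : h₂ ^ c = h₂ * h₂ ^ (c - 1) := by
          rw [← pow_succ']; congr 1; omega
        rw [pow_zero, one_mul, e, ← mul_assoc, hτh₂, zero_mul]; exact zero_mem _
    · have e : h₁ ^ a = h₁ * h₁ ^ (a - 1) := by
        rw [← pow_succ']; congr 1; omega
      rw [e, ← mul_assoc, ← mul_assoc, hτh₁, zero_mul, zero_mul]; exact zero_mem _
  have ττ : τ * τ ∈ Submodule.span ℚ S := by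
    have e36 : h₁ ^ (n - 2) * h₂ ^ (n - 2) = (36 : ℚ) • (o₁ * o₂) := by
      rw [hp₁, hp₂, smul_mul_smul_comm]; norm_num
    have : τ * τ = (((b : ℚ) - 1) / 36) • (h₁ ^ (n - 2) * h₂ ^ (n - 2)) := by
      rw [e36, smul_smul, hτ2]; norm_num
    rw [this]
    exact Submodule.smul_mem _ _ (mono_mem _ _)
  have hmulS : ∀ x ∈ S, ∀ y ∈ S, x * y ∈ Submodule.span ℚ S := by
    rintro x (rfl | ⟨⟨p1, p2⟩, rfl⟩) y (rfl | ⟨⟨q1, q2⟩, rfl⟩)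
    · exact ττ
    · exact τmono _ _
    · rw [mul_comm]; exact τmono _ _
    · have : (h₁ ^ (p1 : ℕ) * h₂ ^ (p2 : ℕ)) * (h₁ ^ (q1 : ℕ) * h₂ ^ (q2 : ℕ))
          = h₁ ^ ((p1 : ℕ) + q1) * h₂ ^ ((p2 : ℕ) + q2) := by
        rw [pow_add, pow_add]; ring
      rw [this]; exact mono_mem _ _
  have h1mem : (1 : A) ∈ Submodule.span ℚ S := by
    simpa using mono_mem 0 0
  have hmul : ∀ x y : A, x ∈ Submodule.span ℚ S → y ∈ Submodule.span ℚ S →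
      x * y ∈ Submodule.span ℚ S := by
    intro x y hx hy
    induction hx using Submodule.span_induction with
    | mem u hu =>
      induction hy using Submodule.span_induction with
      | mem v hv => exact hmulS u hu v hv
      | zero => rw [mul_zero]; exact zero_mem _
      | add v w _ _ hv hw => rw [mul_add]; exact add_mem hv hw
      | smul r v _ hv => rw [mul_smul_comm]; exact Submodule.smul_mem _ _ hv
    | zero => rw [zero_mul]; exact zero_mem _
    | add u v _ _ hu hv => rw [add_mul]; exact add_mem hu hv
    | smul r u _ hu => rw [smul_mul_assoc]; exact Submodule.smul_mem _ _ hu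
  apply le_antisymm
  · have : Algebra.adjoin ℚ ({o₁, o₂, h₁, h₂, τ} : Set A)
        ≤ (Submodule.span ℚ S).toSubalgebra h1mem hmul := by
      apply Algebra.adjoin_le
      have ho₁mem : o₁ ∈ Submodule.span ℚ S := by
        have : o₁ = (6 : ℚ)⁻¹ • (h₁ ^ (n - 2) * h₂ ^ 0) := by
          rw [pow_zero, mul_one, hp₁, smul_smul]; norm_num
        rw [this]; exact Submodule.smul_mem _ _ (mono_mem _ _)
      have ho₂mem : o₂ ∈ Submodule.span ℚ S := by
        have : o₂ = (6 : ℚ)⁻¹ • (h₁ ^ 0 * h₂ ^ (n - 2)) := by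
          rw [pow_zero, one_mul, hp₂, smul_smul]; norm_num
        rw [this]; exact Submodule.smul_mem _ _ (mono_mem _ _)
      have hh₁mem : h₁ ∈ Submodule.span ℚ S := by
        have : h₁ = h₁ ^ 1 * h₂ ^ 0 := by rw [pow_one, pow_zero, mul_one]
        rw [this]; exact mono_mem 1 0
      have hh₂mem : h₂ ∈ Submodule.span ℚ S := by
        have : h₂ = h₁ ^ 0 * h₂ ^ 1 := by rw [pow_one, pow_zero, one_mul]
        rw [this]; exact mono_mem 0 1
      rintro x (rfl | rfl | rfl | rfl | rfl)
      · exact ho₁mem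
      · exact ho₂mem
      · exact hh₁mem
      · exact hh₂mem
      · exact Submodule.subset_span hτS
    intro x hx
    exact this hx
  · rw [Submodule.span_le]
    rintro x (rfl | ⟨⟨p1, p2⟩, rfl⟩) <;>
      simp only [SetLike.mem_coe, Subalgebra.mem_toSubmodule]
    · exact Algebra.subset_adjoin (by simp)
    · exact mul_mem (pow_mem (Algebra.subset_adjoin (by simp)) _)
        (pow_mem (Algebra.subset_adjoin (by simp)) _)
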